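/- Let d ≥ 2, γ₃ ∈ (−2d+1, 1], and let b₃ : [−1,1] × [−1/2,1/2] → [0,∞] be measurable and even in its first argument (b₃(−z,w) = b₃(z,w)). Then for all measurable f, g, h : ℝ^d × ℝ^d → [0,∞], ∫_{ℝ^d}∫_{ℝ^{2d}}∫_{ℝ^d}∫_{S^{2d−1}} |ũ|^{γ₃} b₃(ū·ω, ω₁·ω₂) f(x, v*) g(x, v₁*) h(x, v₂*) dσ(ω) dv₁ dv₂ dv dx = ∫_{ℝ^d}∫_{ℝ^{2d}}∫_{ℝ^d}∫_{S^{2d−1}} |ũ|^{γ₃} b₃(ū·ω, ω₁·ω₂) f(x, v) g(x, v₁) h(x, v₂) dσ(ω) dv₁ dv₂ dv dx, where σ is the surface measure on S^{2d−1}. In other words, the L¹ norm of the ternary gain operator equals the L¹ norm of the ternary loss operator. -/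

import Mathlib

/-!
For fixed `ω ∈ S^{2d-1}` the collision `p = (v, v₁, v₂) ↦ (v*, v₁*, v₂*)` is the rank-one
perturbation `p ↦ p + c(p) • a` of the identity, with `a = (ω₁ + ω₂, -ω₁, -ω₂)` and `c` linear;
on the sphere `c(a) = -2`, so it is a reflection. Hence it is an involution, its determinant is
`±1`, and it preserves Lebesgue measure on `(ℝ^d)³`. It also reverses the sign of `c`, hence of
`ū·ω` (specular reflection), and it conserves `|ũ|`; as `b₃` is even, the kernel is invariant.
Exchanging the `ω` and velocity integrals (Tonelli) and changing variables for each `ω` then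
turns the gain integrand into the loss integrand.
-/

open MeasureTheory Metric
open scoped RealInnerProductSpace ENNReal

noncomputable section

/-- `ℝ^d` as a Euclidean space. -/
abbrev Euc (d : ℕ) := EuclideanSpace ℝ (Fin d)

/-- `ℝ^{2d}` as a Euclidean space (so that its unit sphere is `S^{2d-1}`). -/
abbrev Euc2 (d : ℕ) := EuclideanSpace ℝ (Fin (d + d))

/-- First `ℝ^d`-component of a vector of `ℝ^{2d}`. -/
def split1 (d : ℕ) (w : Euc2 d) : Euc d := WithLp.toLp 2 (fun i => w (Fin.castAdd d i))

/-- Second `ℝ^d`-component of a vector of `ℝ^{2d}`. -/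
def split2 (d : ℕ) (w : Euc2 d) : Euc d := WithLp.toLp 2 (fun i => w (Fin.natAdd d i))

/-- The ternary relative speed `|ũ| = √(|v−v₁|² + |v−v₂|² + |v₁−v₂|²)`. -/
def tRel (d : ℕ) (v v₁ v₂ : Euc d) : ℝ :=
  Real.sqrt (‖v - v₁‖ ^ 2 + ‖v - v₂‖ ^ 2 + ‖v₁ - v₂‖ ^ 2)

/-- The scalar `c = (ω₁·(v₁−v) + ω₂·(v₂−v))/(1 + ω₁·ω₂)` of the ternary collision. -/
def tC (d : ℕ) (v v₁ v₂ : Euc d) (ω : Euc2 d) : ℝ :=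
  (⟪split1 d ω, v₁ - v⟫ + ⟪split2 d ω, v₂ - v⟫) / (1 + ⟪split1 d ω, split2 d ω⟫)

/-- Ternary post-collisional velocity `v* = v + c(ω₁+ω₂)`. -/
def tV (d : ℕ) (v v₁ v₂ : Euc d) (ω : Euc2 d) : Euc d :=
  v + tC d v v₁ v₂ ω • (split1 d ω + split2 d ω)

/-- Ternary post-collisional velocity `v₁* = v₁ − cω₁`. -/
def tV₁ (d : ℕ) (v v₁ v₂ : Euc d) (ω : Euc2 d) : Euc d :=
  v₁ - tC d v v₁ v₂ ω • split1 d ω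

/-- Ternary post-collisional velocity `v₂* = v₂ − cω₂`. -/
def tV₂ (d : ℕ) (v v₁ v₂ : Euc d) (ω : Euc2 d) : Euc d :=
  v₂ - tC d v v₁ v₂ ω • split2 d ω

open Function

section RankOneReflection

variable {R M : Type*} [CommRing R] [AddCommGroup M] [Module R M] {ℓ : M →ₗ[R] R} {a : M}

theorem apply_id_add_smulRight (h : ℓ a = -2) (p : M) :
    ℓ ((LinearMap.id + ℓ.smulRight a : M →ₗ[R] M) p) = -ℓ p := by
  simp only [LinearMap.add_apply, LinearMap.id_apply, LinearMap.smulRight_apply, map_add,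
    map_smul, h, smul_eq_mul]
  ring

theorem involutive_id_add_smulRight (h : ℓ a = -2) :
    Involutive (LinearMap.id + ℓ.smulRight a : M →ₗ[R] M) := by
  intro p
  conv_lhs => rw [LinearMap.add_apply, LinearMap.smulRight_apply, apply_id_add_smulRight h]
  simp only [LinearMap.add_apply, LinearMap.id_apply, LinearMap.smulRight_apply, neg_smul]
  abel

end RankOneReflection

theorem LinearMap.measurePreserving_of_involutive {E : Type*} [NormedAddCommGroup E]
    [NormedSpace ℝ E] [MeasurableSpace E] [BorelSpace E] [FiniteDimensional ℝ E]
    (μ : Measure E) [μ.IsAddHaarMeasure] {f : E →ₗ[ℝ] E} (hf : Involutive f) :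
    MeasurePreserving f μ μ := by
  have hdet : LinearMap.det f * LinearMap.det f = 1 := by
    rw [← LinearMap.det_comp, show f ∘ₗ f = LinearMap.id from LinearMap.ext hf, LinearMap.det_id]
  have habs : |LinearMap.det f| = 1 := by
    rcases mul_self_eq_one_iff.mp hdet with h | h <;> simp [h]
  refine ⟨f.continuous_of_finiteDimensional.measurable, ?_⟩
  rw [Measure.map_linearMap_addHaar_eq_smul_addHaar μ (left_ne_zero_of_mul_eq_one hdet), abs_inv,
    habs, inv_one, ENNReal.ofReal_one, one_smul]

theorem lintegral_prod_prod {α β γ : Type*} [MeasurableSpace α] [MeasurableSpace β]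
    [MeasurableSpace γ] (μ : Measure α) (ν : Measure β) (ρ : Measure γ) [SFinite ν] [SFinite ρ]
    {f : α × β × γ → ℝ≥0∞} (hf : Measurable f) :
    ∫⁻ p, f p ∂μ.prod (ν.prod ρ) = ∫⁻ a, ∫⁻ b, ∫⁻ c, f (a, b, c) ∂ρ ∂ν ∂μ := by
  rw [lintegral_prod _ hf.aemeasurable]
  exact lintegral_congr fun a => lintegral_prod _ (hf.comp measurable_prodMk_left).aemeasurable

theorem lintegral_lintegral_comp_of_measurePreserving {S α : Type*} [MeasurableSpace S]
    [MeasurableSpace α] {ν : Measure S} {μ : Measure α} [SFinite ν] [SFinite μ]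
    {T : S → α → α} (hT : ∀ s, MeasurePreserving (T s) μ μ) (hT' : Measurable (uncurry T))
    {W : S × α → ℝ≥0∞} (hW : Measurable W) :
    ∫⁻ p, ∫⁻ s, W (s, T s p) ∂ν ∂μ = ∫⁻ p, ∫⁻ s, W (s, p) ∂ν ∂μ := by
  calc ∫⁻ p, ∫⁻ s, W (s, T s p) ∂ν ∂μ = ∫⁻ s, ∫⁻ p, W (s, T s p) ∂μ ∂ν :=
        lintegral_lintegral_swap
          (hW.comp (measurable_snd.prodMk (hT'.comp measurable_swap))).aemeasurable
    _ = ∫⁻ s, ∫⁻ p, W (s, p) ∂μ ∂ν :=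
        lintegral_congr fun s => (hT s).lintegral_comp (hW.comp measurable_prodMk_left)
    _ = ∫⁻ p, ∫⁻ s, W (s, p) ∂ν ∂μ :=
        (lintegral_lintegral_swap (f := fun p s => W (s, p))
          (hW.comp measurable_swap).aemeasurable).symm

section TernaryCollision

variable {d : ℕ}

theorem norm_split1_sq_add_norm_split2_sq (w : Euc2 d) :
    ‖split1 d w‖ ^ 2 + ‖split2 d w‖ ^ 2 = ‖w‖ ^ 2 := by
  simp only [← real_inner_self_eq_norm_sq, PiLp.inner_apply, RCLike.inner_apply, conj_trivial,
    split1, split2, Fin.sum_univ_add]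

theorem one_add_inner_split_pos {w : Euc2 d} (hw : ‖w‖ = 1) :
    0 < 1 + ⟪split1 d w, split2 d w⟫ := by
  have hsq := norm_split1_sq_add_norm_split2_sq w
  rw [hw] at hsq
  nlinarith [neg_abs_le ⟪split1 d w, split2 d w⟫, abs_real_inner_le_norm (split1 d w) (split2 d w),
    sq_nonneg (‖split1 d w‖ - ‖split2 d w‖)]

def ternaryCoeff (ω : Euc2 d) : (Euc d × Euc d × Euc d) →ₗ[ℝ] ℝ where
  toFun p := tC d p.1 p.2.1 p.2.2 ω
  map_add' p q := by
    simp only [tC, Prod.fst_add, Prod.snd_add, inner_sub_right, inner_add_right]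
    ring
  map_smul' r p := by
    simp only [tC, Prod.smul_fst, Prod.smul_snd, inner_sub_right, inner_smul_right,
      RingHom.id_apply, smul_eq_mul]
    ring

def ternaryDirection (ω : Euc2 d) : Euc d × Euc d × Euc d :=
  (split1 d ω + split2 d ω, -split1 d ω, -split2 d ω)

def ternaryCollision (ω : Euc2 d) : (Euc d × Euc d × Euc d) →ₗ[ℝ] Euc d × Euc d × Euc d :=
  LinearMap.id + (ternaryCoeff ω).smulRight (ternaryDirection ω)

theorem ternaryCollision_apply (ω : Euc2 d) (v v₁ v₂ : Euc d) :
    ternaryCollision ω (v, v₁, v₂) = (tV d v v₁ v₂ ω, tV₁ d v v₁ v₂ ω, tV₂ d v v₁ v₂ ω) := by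
  simp only [ternaryCollision, ternaryDirection, LinearMap.add_apply, LinearMap.id_apply,
    LinearMap.smulRight_apply, tV, tV₁, tV₂, Prod.smul_mk, Prod.mk_add_mk, smul_neg,
    sub_eq_add_neg]
  rfl

theorem ternaryCoeff_mul_one_add_inner {ω : Euc2 d} (hω : ‖ω‖ = 1) (v v₁ v₂ : Euc d) :
    ternaryCoeff ω (v, v₁, v₂) * (1 + ⟪split1 d ω, split2 d ω⟫)
      = ⟪split1 d ω, v₁ - v⟫ + ⟪split2 d ω, v₂ - v⟫ :=
  div_mul_cancel₀ _ (one_add_inner_split_pos hω).ne'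

theorem ternaryCoeff_ternaryDirection {ω : Euc2 d} (hω : ‖ω‖ = 1) :
    ternaryCoeff ω (ternaryDirection ω) = -2 := by
  have hs := one_add_inner_split_pos hω
  have hsq := norm_split1_sq_add_norm_split2_sq ω
  rw [hω, one_pow] at hsq
  rw [← mul_left_inj' hs.ne', ternaryDirection, ternaryCoeff_mul_one_add_inner hω]
  simp only [inner_sub_right, inner_add_right, inner_neg_right, real_inner_self_eq_norm_sq,
    real_inner_comm (split1 d ω) (split2 d ω)]
  linear_combination (-2 : ℝ) * hsq

theorem ternaryCollision_involutive {ω : Euc2 d} (hω : ‖ω‖ = 1) :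
    Involutive (ternaryCollision ω) :=
  involutive_id_add_smulRight (ternaryCoeff_ternaryDirection hω)

theorem ternaryCollision_measurePreserving {ω : Euc2 d} (hω : ‖ω‖ = 1) :
    MeasurePreserving (ternaryCollision ω) volume volume :=
  haveI : (volume : Measure (Euc d × Euc d)).IsAddHaarMeasure :=
    Measure.prod.instIsAddHaarMeasure _ _
  haveI : (volume : Measure (Euc d × Euc d × Euc d)).IsAddHaarMeasure :=
    Measure.prod.instIsAddHaarMeasure _ _
  LinearMap.measurePreserving_of_involutive _ (ternaryCollision_involutive hω)

@[fun_prop]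
theorem Measurable.ternaryCollision {α : Type*} [MeasurableSpace α] {f : α → Euc2 d}
    {g : α → Euc d × Euc d × Euc d} (hf : Measurable f) (hg : Measurable g) :
    Measurable fun x => ternaryCollision (f x) (g x) := by
  simp only [_root_.ternaryCollision, ternaryCoeff, ternaryDirection, LinearMap.add_apply,
    LinearMap.id_apply, LinearMap.smulRight_apply, LinearMap.coe_mk, AddHom.coe_mk]
  unfold tC split1 split2
  fun_prop

theorem tRel_tV {ω : Euc2 d} (hω : ‖ω‖ = 1) (v v₁ v₂ : Euc d) :
    tRel d (tV d v v₁ v₂ ω) (tV₁ d v v₁ v₂ ω) (tV₂ d v v₁ v₂ ω) = tRel d v v₁ v₂ := by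
  set a := split1 d ω
  set b := split2 d ω
  set c := tC d v v₁ v₂ ω
  have hc : c * (1 + ⟪a, b⟫) = ⟪a, v₁ - v⟫ + ⟪b, v₂ - v⟫ :=
    ternaryCoeff_mul_one_add_inner hω v v₁ v₂
  have hsq : ‖a‖ ^ 2 + ‖b‖ ^ 2 = 1 := by rw [norm_split1_sq_add_norm_split2_sq, hω, one_pow]
  have e₁ : tV d v v₁ v₂ ω - tV₁ d v v₁ v₂ ω = (v - v₁) + c • (2 • a + b) := by
    simp only [tV, tV₁]; module
  have e₂ : tV d v v₁ v₂ ω - tV₂ d v v₁ v₂ ω = (v - v₂) + c • (a + 2 • b) := by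
    simp only [tV, tV₂]; module
  have e₃ : tV₁ d v v₁ v₂ ω - tV₂ d v v₁ v₂ ω = (v₁ - v₂) + c • (b - a) := by
    simp only [tV₁, tV₂]; module
  -- `|ũ|²` is a quadratic form `Q` with `Q(a) = 6 (1 + ω₁·ω₂)` and polar form `B(p, a) = -3 u·ω`,
  -- so `Q(p + c a) - Q(p) = 6 c (c (1 + ω₁·ω₂) - u·ω) = 0`.
  unfold tRel
  rw [e₁, e₂, e₃]
  congr 1
  simp only [norm_add_sq_real, norm_sub_sq_real, norm_smul, mul_pow, Real.norm_eq_abs, sq_abs,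
    inner_smul_right, inner_add_left, inner_add_right, inner_sub_left, inner_sub_right,
    real_inner_self_eq_norm_sq, two_smul] at hc ⊢
  simp only [real_inner_comm a b, real_inner_comm a v, real_inner_comm a v₁, real_inner_comm a v₂,
    real_inner_comm b v, real_inner_comm b v₁, real_inner_comm b v₂] at hc ⊢
  linear_combination 6 * c * hc + 6 * c ^ 2 * hsq

theorem inner_split_sub_tV_add_inner_split_sub_tV {ω : Euc2 d} (hω : ‖ω‖ = 1)
    (v v₁ v₂ : Euc d) :
    ⟪split1 d ω, tV₁ d v v₁ v₂ ω - tV d v v₁ v₂ ω⟫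
        + ⟪split2 d ω, tV₂ d v v₁ v₂ ω - tV d v v₁ v₂ ω⟫
      = -(⟪split1 d ω, v₁ - v⟫ + ⟪split2 d ω, v₂ - v⟫) := by
  rw [← ternaryCoeff_mul_one_add_inner hω, ← ternaryCoeff_mul_one_add_inner hω,
    ← ternaryCollision_apply, ternaryCollision, apply_id_add_smulRight
      (ternaryCoeff_ternaryDirection hω), neg_mul]

def ternaryKernel (γ₃ : ℝ) (b₃ : ℝ → ℝ → ℝ≥0∞) (ω : Euc2 d) (p : Euc d × Euc d × Euc d) :
    ℝ≥0∞ :=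
  ENNReal.ofReal (tRel d p.1 p.2.1 p.2.2 ^ γ₃) *
    b₃ ((⟪split1 d ω, p.2.1 - p.1⟫ + ⟪split2 d ω, p.2.2 - p.1⟫) / tRel d p.1 p.2.1 p.2.2)
      ⟪split1 d ω, split2 d ω⟫

theorem ternaryKernel_ternaryCollision {γ₃ : ℝ} {b₃ : ℝ → ℝ → ℝ≥0∞}
    (hb₃even : ∀ z w : ℝ, b₃ (-z) w = b₃ z w) {ω : Euc2 d} (hω : ‖ω‖ = 1)
    (p : Euc d × Euc d × Euc d) :
    ternaryKernel γ₃ b₃ ω (ternaryCollision ω p) = ternaryKernel γ₃ b₃ ω p := by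
  obtain ⟨v, v₁, v₂⟩ := p
  rw [ternaryCollision_apply, ternaryKernel, tRel_tV hω,
    inner_split_sub_tV_add_inner_split_sub_tV hω, neg_div, hb₃even, ternaryKernel]

theorem measurable_ternaryKernel (γ₃ : ℝ) {b₃ : ℝ → ℝ → ℝ≥0∞}
    (hb₃ : Measurable (uncurry b₃)) : Measurable (uncurry (ternaryKernel (d := d) γ₃ b₃)) := by
  unfold ternaryKernel tRel split1 split2
  exact Measurable.mul (by fun_prop) (hb₃.comp (Measurable.prodMk (by fun_prop) (by fun_prop)))

theorem lintegral_ternaryGain_eq_lintegral_ternaryLoss {γ₃ : ℝ} {b₃ : ℝ → ℝ → ℝ≥0∞}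
    (hb₃ : Measurable (uncurry b₃)) (hb₃even : ∀ z w : ℝ, b₃ (-z) w = b₃ z w)
    {F G H : Euc d → ℝ≥0∞} (hF : Measurable F) (hG : Measurable G) (hH : Measurable H) :
    (∫⁻ v, ∫⁻ v₁, ∫⁻ v₂, ∫⁻ ω : sphere (0 : Euc2 d) 1, ternaryKernel γ₃ b₃ ω (v, v₁, v₂) *
        F (tV d v v₁ v₂ ω) * G (tV₁ d v v₁ v₂ ω) * H (tV₂ d v v₁ v₂ ω) ∂volume.toSphere)
      = ∫⁻ v, ∫⁻ v₁, ∫⁻ v₂, ∫⁻ ω : sphere (0 : Euc2 d) 1,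
          ternaryKernel γ₃ b₃ ω (v, v₁, v₂) * F v * G v₁ * H v₂ ∂volume.toSphere := by
  let W (q : sphere (0 : Euc2 d) 1 × (Euc d × Euc d × Euc d)) : ℝ≥0∞ :=
    ternaryKernel γ₃ b₃ q.1 q.2 * F q.2.1 * G q.2.2.1 * H q.2.2.2
  have hW : Measurable W :=
    ((((measurable_ternaryKernel γ₃ hb₃).comp (measurable_subtype_coe.prodMap measurable_id)).mul
      (by fun_prop)).mul (by fun_prop)).mul (by fun_prop)
  have hT : Measurable
      (uncurry fun ω : sphere (0 : Euc2 d) 1 => ⇑(ternaryCollision (ω : Euc2 d))) := by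
    fun_prop
  have hgain (ω : sphere (0 : Euc2 d) 1) (v v₁ v₂ : Euc d) :
      ternaryKernel γ₃ b₃ ω (v, v₁, v₂) * F (tV d v v₁ v₂ ω) * G (tV₁ d v v₁ v₂ ω) *
        H (tV₂ d v v₁ v₂ ω) = W (ω, ternaryCollision (ω : Euc2 d) (v, v₁, v₂)) := by
    rw [← ternaryKernel_ternaryCollision hb₃even (norm_eq_of_mem_sphere ω),
      ternaryCollision_apply]
  simp_rw [hgain]
  calc _ = ∫⁻ p, ∫⁻ ω, W (ω, ternaryCollision (ω : Euc2 d) p) ∂volume.toSphere :=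
        (lintegral_prod_prod _ _ _
          (hW.comp (measurable_fst.prodMk hT)).lintegral_prod_left').symm
    _ = ∫⁻ p, ∫⁻ ω, W (ω, p) ∂volume.toSphere := lintegral_lintegral_comp_of_measurePreserving
        (fun ω => ternaryCollision_measurePreserving (norm_eq_of_mem_sphere ω)) hT hW
    _ = _ := lintegral_prod_prod _ _ _ hW.lintegral_prod_left'

end TernaryCollision

theorem ternary_gain_L1_eq_loss_L1_general
    (d : ℕ) (γ₃ : ℝ)
    (b₃ : ℝ → ℝ → ℝ≥0∞) (hb₃ : Measurable (Function.uncurry b₃))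
    (hb₃even : ∀ z w : ℝ, b₃ (-z) w = b₃ z w)
    (f g h : Euc d → Euc d → ℝ≥0∞)
    (hf : Measurable (Function.uncurry f)) (hg : Measurable (Function.uncurry g))
    (hh : Measurable (Function.uncurry h)) :
    (∫⁻ x : Euc d, ∫⁻ v : Euc d, ∫⁻ v₁ : Euc d, ∫⁻ v₂ : Euc d,
        ∫⁻ ω : sphere (0 : Euc2 d) 1,
        ENNReal.ofReal (tRel d v v₁ v₂ ^ γ₃) *
          b₃ ((⟪split1 d (ω : Euc2 d), v₁ - v⟫ + ⟪split2 d (ω : Euc2 d), v₂ - v⟫)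
                / tRel d v v₁ v₂)
             ⟪split1 d (ω : Euc2 d), split2 d (ω : Euc2 d)⟫ *
          f x (tV d v v₁ v₂ (ω : Euc2 d)) * g x (tV₁ d v v₁ v₂ (ω : Euc2 d)) *
          h x (tV₂ d v v₁ v₂ (ω : Euc2 d)) ∂volume.toSphere)
      = ∫⁻ x : Euc d, ∫⁻ v : Euc d, ∫⁻ v₁ : Euc d, ∫⁻ v₂ : Euc d,
          ∫⁻ ω : sphere (0 : Euc2 d) 1,
          ENNReal.ofReal (tRel d v v₁ v₂ ^ γ₃) *
            b₃ ((⟪split1 d (ω : Euc2 d), v₁ - v⟫ + ⟪split2 d (ω : Euc2 d), v₂ - v⟫)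
                  / tRel d v v₁ v₂)
               ⟪split1 d (ω : Euc2 d), split2 d (ω : Euc2 d)⟫ *
            f x v * g x v₁ * h x v₂ ∂volume.toSphere :=
  lintegral_congr fun _ => lintegral_ternaryGain_eq_lintegral_ternaryLoss hb₃ hb₃even
    hf.of_uncurry_left hg.of_uncurry_left hh.of_uncurry_left

/-- **The `L¹` norm of the ternary gain operator equals the `L¹` norm of the ternary
loss operator**: integrating the ternary collision kernel
`|ũ|^{γ₃} b₃(ū·ω, ω₁·ω₂)` against `f(x,v*)g(x,v₁*)h(x,v₂*)` over
`ℝ^d_x × ℝ^d_v × ℝ^{2d}_{(v₁,v₂)} × S^{2d−1}` gives the same value as integrating it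
against `f(x,v)g(x,v₁)h(x,v₂)`.  The sphere `S^{2d-1}` carries its canonical surface
measure `volume.toSphere`. -/
theorem ternary_gain_L1_eq_loss_L1
    (d : ℕ) (hd : 2 ≤ d) (γ₃ : ℝ) (hγ₃l : -(2 * (d : ℝ)) + 1 < γ₃) (hγ₃u : γ₃ ≤ 1)
    (b₃ : ℝ → ℝ → ℝ≥0∞) (hb₃ : Measurable (Function.uncurry b₃))
    (hb₃even : ∀ z w : ℝ, b₃ (-z) w = b₃ z w)
    (f g h : Euc d → Euc d → ℝ≥0∞)
    (hf : Measurable (Function.uncurry f)) (hg : Measurable (Function.uncurry g))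
    (hh : Measurable (Function.uncurry h)) :
    (∫⁻ x : Euc d, ∫⁻ v : Euc d, ∫⁻ v₁ : Euc d, ∫⁻ v₂ : Euc d,
        ∫⁻ ω : sphere (0 : Euc2 d) 1,
        ENNReal.ofReal (tRel d v v₁ v₂ ^ γ₃) *
          b₃ ((⟪split1 d (ω : Euc2 d), v₁ - v⟫ + ⟪split2 d (ω : Euc2 d), v₂ - v⟫)
                / tRel d v v₁ v₂)
             ⟪split1 d (ω : Euc2 d), split2 d (ω : Euc2 d)⟫ *
          f x (tV d v v₁ v₂ (ω : Euc2 d)) * g x (tV₁ d v v₁ v₂ (ω : Euc2 d)) *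
          h x (tV₂ d v v₁ v₂ (ω : Euc2 d)) ∂volume.toSphere)
      = ∫⁻ x : Euc d, ∫⁻ v : Euc d, ∫⁻ v₁ : Euc d, ∫⁻ v₂ : Euc d,
          ∫⁻ ω : sphere (0 : Euc2 d) 1,
          ENNReal.ofReal (tRel d v v₁ v₂ ^ γ₃) *
            b₃ ((⟪split1 d (ω : Euc2 d), v₁ - v⟫ + ⟪split2 d (ω : Euc2 d), v₂ - v⟫)
                  / tRel d v v₁ v₂)
               ⟪split1 d (ω : Euc2 d), split2 d (ω : Euc2 d)⟫ *
            f x v * g x v₁ * h x v₂ ∂volume.toSphere :=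
  ternary_gain_L1_eq_loss_L1_general d γ₃ b₃ hb₃ hb₃even f g h hf hg hh
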